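/- Let (G,X,H) be an uncolorable degree-feasible configuration such that G has no separating vertex. Then G is regular, and for every two distinct vertices u, v of G, the hypergraph H[X_u ∪ X_v] is a μ_G(u,v)-regular bipartite graph with parts X_u and X_v. -/

import Mathlib

open Finset

noncomputable section
open scoped Classical

structure HGraph (α : Type) where
  verts : Finset α
  edges : Finset ℕ
  inc : ℕ → Finset α
  inc_sub : ∀ e ∈ edges, inc e ⊆ verts
  inc_card : ∀ e ∈ edges, 2 ≤ (inc e).card

variable {α β : Type} [DecidableEq α] [DecidableEq β]

namespace HGraph

def degree (G : HGraph α) (v : α) : ℕ :=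
  (G.edges.filter (fun e => v ∈ G.inc e)).card

def maxDegree (G : HGraph α) : ℕ := G.verts.sup G.degree

def mult (G : HGraph α) (u v : α) : ℕ :=
  (G.edges.filter (fun e => G.inc e = {u, v})).card

def Adj (G : HGraph α) (u v : α) : Prop :=
  u ≠ v ∧ ∃ e ∈ G.edges, u ∈ G.inc e ∧ v ∈ G.inc e

def Connected (G : HGraph α) : Prop :=
  ∀ u ∈ G.verts, ∀ v ∈ G.verts, Relation.ReflTransGen G.Adj u v

def IndepSet (H : HGraph β) (S : Finset β) : Prop :=
  ∀ e ∈ H.edges, ¬ H.inc e ⊆ S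

def eraseEdge (H : HGraph β) (e₀ : ℕ) : HGraph β where
  verts := H.verts
  edges := H.edges.erase e₀
  inc := H.inc
  inc_sub := fun e he => H.inc_sub e (Finset.mem_of_mem_erase he)
  inc_card := fun e he => H.inc_card e (Finset.mem_of_mem_erase he)

def induce (G : HGraph α) (S : Finset α) : HGraph α where
  verts := S
  edges := G.edges.filter (fun e => G.inc e ⊆ S)
  inc := G.inc
  inc_sub := fun e he => (Finset.mem_filter.mp he).2
  inc_card := fun e he => G.inc_card e (Finset.mem_filter.mp he).1

def IsSub (G' G : HGraph α) : Prop :=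
  G'.verts ⊆ G.verts ∧ G'.edges ⊆ G.edges ∧ ∀ e ∈ G'.edges, G'.inc e = G.inc e

def shrink (G : HGraph α) (v : α) : HGraph α where
  verts := G.verts.erase v
  edges := G.edges.filter (fun e => 2 ≤ ((G.inc e).erase v).card)
  inc := fun e => (G.inc e).erase v
  inc_sub := by
    intro e he y hy
    rw [Finset.mem_erase] at hy ⊢
    exact ⟨hy.1, G.inc_sub e (Finset.mem_filter.mp he).1 hy.2⟩
  inc_card := fun e he => (Finset.mem_filter.mp he).2

def nbhd (H : HGraph β) (x : β) : Finset β :=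
  H.verts.filter (fun y => ∃ e ∈ H.edges, H.inc e = {x, y})

def numComponents (G : HGraph α) : ℕ :=
  (G.verts.image (fun v => G.verts.filter (fun u => Relation.ReflTransGen G.Adj v u))).card

def IsBridge (G : HGraph α) (e : ℕ) : Prop :=
  numComponents (G.eraseEdge e) = numComponents G + ((G.inc e).card - 1)

def IsSepVertex (G : HGraph α) (v : α) : Prop :=
  ∃ A B : Finset α, A ∪ B = G.verts ∧ A ∩ B = {v} ∧ 2 ≤ A.card ∧ 2 ≤ B.card ∧
    ∀ e ∈ G.edges, G.inc e ⊆ A ∨ G.inc e ⊆ B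

def IsBlock (G : HGraph α) (S : Finset α) : Prop :=
  S ⊆ G.verts ∧ (G.induce S).Connected ∧ (∀ v, ¬ IsSepVertex (G.induce S) v) ∧
    ∀ S' : Finset α, S ⊆ S' → S' ⊆ G.verts → (G.induce S').Connected →
      (∀ v, ¬ IsSepVertex (G.induce S') v) → S' = S

end HGraph

open HGraph

def IsCover (G : HGraph α) (X : α → Finset β) (H : HGraph β) : Prop :=
  (∀ u ∈ G.verts, ∀ v ∈ G.verts, u ≠ v → Disjoint (X u) (X v)) ∧
  H.verts = G.verts.biUnion X ∧
  (∀ v ∈ G.verts, H.IndepSet (X v)) ∧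
  ∃ M : ℕ → Finset ℕ,
    (∀ e ∈ G.edges,
      M e ⊆ H.edges ∧
      (∀ e' ∈ M e, (∀ v ∈ G.inc e, (H.inc e' ∩ X v).card = 1) ∧
        H.inc e' ⊆ (G.inc e).biUnion X) ∧
      ∀ e₁ ∈ M e, ∀ e₂ ∈ M e, e₁ ≠ e₂ → Disjoint (H.inc e₁) (H.inc e₂)) ∧
    H.edges = G.edges.biUnion M

def HasIT (H : HGraph β) (Vs : Finset α) (X : α → Finset β) : Prop :=
  ∃ T : Finset β, H.IndepSet T ∧ ∀ v ∈ Vs, (T ∩ X v).card = 1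

def MinUncol (H : HGraph β) (Vs : Finset α) (X : α → Finset β) : Prop :=
  ¬ HasIT H Vs X ∧ ∀ e ∈ H.edges, HasIT (H.eraseEdge e) Vs X

def DPColorableAt (G : HGraph α) (k : ℕ) : Prop :=
  ∀ (X : α → Finset ℕ) (H : HGraph ℕ),
    IsCover G X H → (∀ v ∈ G.verts, k ≤ (X v).card) → HasIT H G.verts X

def chiDP (G : HGraph α) : ℕ := sInf {k | DPColorableAt G k}

def DPDegreeColorable (G : HGraph α) : Prop :=
  ∀ (X : α → Finset ℕ) (H : HGraph ℕ),
    IsCover G X H → (∀ v ∈ G.verts, G.degree v ≤ (X v).card) → HasIT H G.verts X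

def colNum (G : HGraph α) : ℕ :=
  sInf {k | ∀ G' : HGraph α, G'.IsSub G → G'.verts.Nonempty →
    ∃ v ∈ G'.verts, G'.degree v ≤ k}

def ProperColoring (G : HGraph α) (φ : α → ℕ) : Prop :=
  ∀ e ∈ G.edges, ∃ u ∈ G.inc e, ∃ v ∈ G.inc e, φ u ≠ φ v

def LColorable (G : HGraph α) (L : α → Finset ℕ) : Prop :=
  ∃ φ : α → ℕ, ProperColoring G φ ∧ ∀ v ∈ G.verts, φ v ∈ L v

def chiList (G : HGraph α) : ℕ :=
  sInf {k | ∀ L : α → Finset ℕ, (∀ v ∈ G.verts, k ≤ (L v).card) → LColorable G L}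

def IsTKn (B : HGraph α) (t n : ℕ) : Prop :=
  1 ≤ n ∧ B.verts.card = n ∧ (∀ e ∈ B.edges, (B.inc e).card = 2) ∧
  ∀ u ∈ B.verts, ∀ v ∈ B.verts, u ≠ v → B.mult u v = t

def IsTCn (B : HGraph α) (t n : ℕ) : Prop :=
  3 ≤ n ∧ B.verts.card = n ∧ (∀ e ∈ B.edges, (B.inc e).card = 2) ∧
  ∃ f : ℕ → α,
    B.verts = (Finset.range n).image f ∧
    (∀ i < n, ∀ j < n, i ≠ j → f i ≠ f j) ∧
    ∀ i < n, ∀ j < n, i ≠ j →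
      B.mult (f i) (f j) = if j = (i + 1) % n ∨ i = (j + 1) % n then t else 0

def IsDPHyperbrick (B : HGraph α) : Prop :=
  (∃ t n, 1 ≤ t ∧ 1 ≤ n ∧ IsTKn B t n) ∨
  (∃ t n, 1 ≤ t ∧ 3 ≤ n ∧ IsTCn B t n) ∨
  (∃ e ∈ B.edges, B.verts = B.inc e ∧ B.edges = {e})

def AdjPair (G : HGraph α) (u v : α) : Prop :=
  u ≠ v ∧ ∃ e ∈ G.edges, G.inc e = {u, v}

def IsKConfig (G : HGraph α) (X : α → Finset β) (H : HGraph β) (t n : ℕ) : Prop :=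
  1 ≤ t ∧ 1 ≤ n ∧ IsTKn G t n ∧ IsCover G X H ∧
  ∃ P : α → ℕ → Finset β,
    (∀ v ∈ G.verts, ∀ i ∈ Finset.range (n - 1), ∀ j ∈ Finset.range (n - 1),
      i ≠ j → Disjoint (P v i) (P v j)) ∧
    (∀ v ∈ G.verts, X v = (Finset.range (n - 1)).biUnion (P v)) ∧
    (∀ v ∈ G.verts, ∀ i ∈ Finset.range (n - 1), (P v i).card = t) ∧
    (∀ i ∈ Finset.range (n - 1), ∀ u ∈ G.verts, ∀ v ∈ G.verts, u ≠ v →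
      ∀ x ∈ P u i, ∀ y ∈ P v i, ∃ e ∈ H.edges, H.inc e = {x, y}) ∧
    (∀ e ∈ H.edges, ∃ i ∈ Finset.range (n - 1), ∃ u ∈ G.verts, ∃ v ∈ G.verts,
      u ≠ v ∧ ∃ x ∈ P u i, ∃ y ∈ P v i, H.inc e = {x, y})

def IsOddCConfig (G : HGraph α) (X : α → Finset β) (H : HGraph β) (t n : ℕ) : Prop :=
  1 ≤ t ∧ 5 ≤ n ∧ Odd n ∧ IsTCn G t n ∧ IsCover G X H ∧
  ∃ P : α → ℕ → Finset β,
    (∀ v ∈ G.verts, Disjoint (P v 0) (P v 1)) ∧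
    (∀ v ∈ G.verts, X v = P v 0 ∪ P v 1) ∧
    (∀ v ∈ G.verts, (P v 0).card = t ∧ (P v 1).card = t) ∧
    (∀ i ∈ ({0, 1} : Finset ℕ), ∀ u ∈ G.verts, ∀ v ∈ G.verts, AdjPair G u v →
      ∀ x ∈ P u i, ∀ y ∈ P v i, ∃ e ∈ H.edges, H.inc e = {x, y}) ∧
    (∀ e ∈ H.edges, ∃ i ∈ ({0, 1} : Finset ℕ), ∃ u ∈ G.verts, ∃ v ∈ G.verts,
      AdjPair G u v ∧ ∃ x ∈ P u i, ∃ y ∈ P v i, H.inc e = {x, y})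

def IsEvenCConfig (G : HGraph α) (X : α → Finset β) (H : HGraph β) (t n : ℕ) : Prop :=
  1 ≤ t ∧ 4 ≤ n ∧ Even n ∧ IsTCn G t n ∧ IsCover G X H ∧
  ∃ P : α → ℕ → Finset β, ∃ w w' : α, w ∈ G.verts ∧ w' ∈ G.verts ∧ AdjPair G w w' ∧
    (∀ v ∈ G.verts, Disjoint (P v 0) (P v 1)) ∧
    (∀ v ∈ G.verts, X v = P v 0 ∪ P v 1) ∧
    (∀ v ∈ G.verts, (P v 0).card = t ∧ (P v 1).card = t) ∧
    (∀ i ∈ ({0, 1} : Finset ℕ), ∀ u ∈ G.verts, ∀ v ∈ G.verts, AdjPair G u v →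
      ({u, v} : Finset α) ≠ {w, w'} →
      ∀ x ∈ P u i, ∀ y ∈ P v i, ∃ e ∈ H.edges, H.inc e = {x, y}) ∧
    (∀ x ∈ P w 0, ∀ y ∈ P w' 1, ∃ e ∈ H.edges, H.inc e = {x, y}) ∧
    (∀ x ∈ P w 1, ∀ y ∈ P w' 0, ∃ e ∈ H.edges, H.inc e = {x, y}) ∧
    (∀ e ∈ H.edges, ∃ x y : β, H.inc e = {x, y} ∧
      ((∃ i ∈ ({0, 1} : Finset ℕ), ∃ u ∈ G.verts, ∃ v ∈ G.verts,
        AdjPair G u v ∧ ({u, v} : Finset α) ≠ {w, w'} ∧ x ∈ P u i ∧ y ∈ P v i) ∨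
       (x ∈ P w 0 ∧ y ∈ P w' 1) ∨ (x ∈ P w 1 ∧ y ∈ P w' 0)))

def IsEConfig (G : HGraph α) (X : α → Finset β) (H : HGraph β) : Prop :=
  (∃ e₀ ∈ G.edges, G.edges = {e₀} ∧ G.verts = G.inc e₀) ∧
  IsCover G X H ∧ (∀ v ∈ G.verts, (X v).card = 1) ∧
  ∃ e₁ ∈ H.edges, H.edges = {e₁} ∧ H.inc e₁ = G.verts.biUnion X

def IsMergeOf (G : HGraph α) (X : α → Finset β) (H : HGraph β)
    (G₁ : HGraph α) (X₁ : α → Finset β) (H₁ : HGraph β)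
    (G₂ : HGraph α) (X₂ : α → Finset β) (H₂ : HGraph β)
    (v₁ v₂ vs : α) : Prop :=
  Disjoint G₁.verts G₂.verts ∧ Disjoint G₁.edges G₂.edges ∧
  Disjoint H₁.verts H₂.verts ∧ Disjoint H₁.edges H₂.edges ∧
  v₁ ∈ G₁.verts ∧ v₂ ∈ G₂.verts ∧ vs ∉ G₁.verts ∪ G₂.verts ∧
  G.verts = insert vs (((G₁.verts ∪ G₂.verts).erase v₁).erase v₂) ∧
  G.edges = G₁.edges ∪ G₂.edges ∧
  (∀ e ∈ G₁.edges, G.inc e =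
    if v₁ ∈ G₁.inc e then insert vs ((G₁.inc e).erase v₁) else G₁.inc e) ∧
  (∀ e ∈ G₂.edges, G.inc e =
    if v₂ ∈ G₂.inc e then insert vs ((G₂.inc e).erase v₂) else G₂.inc e) ∧
  H.verts = H₁.verts ∪ H₂.verts ∧ H.edges = H₁.edges ∪ H₂.edges ∧
  (∀ e ∈ H₁.edges, H.inc e = H₁.inc e) ∧ (∀ e ∈ H₂.edges, H.inc e = H₂.inc e) ∧
  X vs = X₁ v₁ ∪ X₂ v₂ ∧
  (∀ u ∈ G₁.verts.erase v₁, X u = X₁ u) ∧ (∀ u ∈ G₂.verts.erase v₂, X u = X₂ u)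

inductive Constructible : HGraph α → (α → Finset β) → HGraph β → Prop where
  | K : ∀ {G : HGraph α} {X : α → Finset β} {H : HGraph β} {t n : ℕ},
      IsKConfig G X H t n → Constructible G X H
  | Codd : ∀ {G : HGraph α} {X : α → Finset β} {H : HGraph β} {t n : ℕ},
      IsOddCConfig G X H t n → Constructible G X H
  | Ceven : ∀ {G : HGraph α} {X : α → Finset β} {H : HGraph β} {t n : ℕ},
      IsEvenCConfig G X H t n → Constructible G X H
  | E : ∀ {G : HGraph α} {X : α → Finset β} {H : HGraph β},
      IsEConfig G X H → Constructible G X H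
  | merge : ∀ {G G₁ G₂ : HGraph α} {X X₁ X₂ : α → Finset β} {H H₁ H₂ : HGraph β}
      {v₁ v₂ vs : α},
      Constructible G₁ X₁ H₁ → Constructible G₂ X₂ H₂ →
      IsMergeOf G X H G₁ X₁ H₁ G₂ X₂ H₂ v₁ v₂ vs → Constructible G X H

def reducedVerts (G : HGraph α) (X : α → Finset β) (H : HGraph β)
    (v : α) (x : β) : Finset β :=
  (G.shrink v).verts.biUnion (fun u => X u \ H.nbhd x)

def reduceH (G : HGraph α) (X : α → Finset β) (H : HGraph β)
    (v : α) (x : β) : HGraph β where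
  verts := reducedVerts G X H v x
  edges := H.edges.filter (fun e =>
    2 ≤ ((H.inc e).erase x).card ∧ (H.inc e).erase x ⊆ reducedVerts G X H v x)
  inc := fun e => (H.inc e).erase x
  inc_sub := fun e he => (Finset.mem_filter.mp he).2.2
  inc_card := fun e he => (Finset.mem_filter.mp he).2.1

/-! A degree-feasible cover of a connected graph with one vertex whose list exceeds its degree
is colourable greedily, colouring the vertices in order of decreasing distance from it. So in an
uncolorable configuration every list is tight, and tightness persists after colouring any vertex
`u` by any `y ∈ X u` and deleting the neighbours of `y`: without a separating vertex, `G - u` is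
still connected. This forces `y` to have exactly `μ(z, u)` neighbours in every other list `X z`,
and every matching of a hyperedge to saturate the lists of its vertices. Double counting across
ordinary edges and saturation of hyperedges give equal list sizes, hence equal degrees, at
adjacent vertices; the neighbour counts give the degrees in `H[X_u ∪ X_v]`. -/

namespace HGraph

variable {G : HGraph α}

theorem mult_comm (u v : α) : G.mult u v = G.mult v u := by
  simp only [mult, Finset.pair_comm]

theorem inc_eq_pair_of_subset {f : ℕ} (hf : f ∈ G.edges) {u v : α} (huv : u ≠ v)
    (hsub : G.inc f ⊆ {u, v}) : G.inc f = {u, v} :=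
  eq_of_subset_of_card_le hsub (by rw [card_pair huv]; exact G.inc_card f hf)

theorem inc_eq_pair_of_card_le {f : ℕ} {u v : α} (huv : u ≠ v) (hu : u ∈ G.inc f)
    (hv : v ∈ G.inc f) (hcard : (G.inc f).card ≤ 2) : G.inc f = {u, v} :=
  (eq_of_subset_of_card_le (insert_subset hu (singleton_subset_iff.2 hv))
    (by rwa [card_pair huv])).symm

theorem card_inc_erase_lt_two_iff {f : ℕ} (hf : f ∈ G.edges) {z w : α} (hzw : z ≠ w)
    (hz : z ∈ G.inc f) : ((G.inc f).erase w).card < 2 ↔ G.inc f = {z, w} := by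
  constructor
  · intro hlt
    by_cases hw : w ∈ G.inc f
    · have := card_erase_add_one hw
      exact inc_eq_pair_of_card_le hzw hz hw (by omega)
    · rw [erase_eq_of_notMem hw] at hlt
      exact absurd (G.inc_card f hf) (by omega)
  · intro hinc
    simp [hinc, erase_insert_of_ne hzw]

theorem degree_eq_degree_shrink_add_mult {z w : α} (hzw : z ≠ w) :
    G.degree z = (G.shrink w).degree z + G.mult z w := by
  have hshrink : (G.shrink w).edges.filter (fun f => z ∈ (G.shrink w).inc f) =
      (G.edges.filter (fun f => z ∈ G.inc f)).filter
        (fun f => 2 ≤ ((G.inc f).erase w).card) := by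
    ext f
    simp only [shrink, mem_filter, mem_erase]
    tauto
  have hmult : G.edges.filter (fun f => G.inc f = {z, w}) =
      (G.edges.filter (fun f => z ∈ G.inc f)).filter
        (fun f => ¬ 2 ≤ ((G.inc f).erase w).card) := by
    ext f
    simp only [mem_filter, not_le]
    constructor
    · rintro ⟨hf, hinc⟩
      have hz : z ∈ G.inc f := by simp [hinc]
      exact ⟨⟨hf, hz⟩, (card_inc_erase_lt_two_iff hf hzw hz).2 hinc⟩
    · rintro ⟨⟨hf, hz⟩, hlt⟩
      exact ⟨hf, (card_inc_erase_lt_two_iff hf hzw hz).1 hlt⟩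
  rw [degree, degree, mult, hshrink, hmult, card_filter_add_card_filter_not]

omit [DecidableEq α] in
theorem Adj.mem_verts {a b : α} (h : G.Adj a b) : a ∈ G.verts ∧ b ∈ G.verts := by
  obtain ⟨_, f, hf, ha, hb⟩ := h
  exact ⟨G.inc_sub f hf ha, G.inc_sub f hf hb⟩

theorem Adj.degree_pos {a b : α} (h : G.Adj a b) : 0 < G.degree a := by
  obtain ⟨_, f, hf, ha, _⟩ := h
  exact card_pos.2 ⟨f, mem_filter.2 ⟨hf, ha⟩⟩

theorem Adj.shrink {a b w : α} (h : G.Adj a b) (ha : a ≠ w) (hb : b ≠ w) :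
    (G.shrink w).Adj a b := by
  obtain ⟨hab, f, hf, haf, hbf⟩ := h
  have haf' : a ∈ (G.inc f).erase w := mem_erase.2 ⟨ha, haf⟩
  have hbf' : b ∈ (G.inc f).erase w := mem_erase.2 ⟨hb, hbf⟩
  have hcard : 2 ≤ ((G.inc f).erase w).card := by
    rw [← card_pair hab]
    exact card_le_card (insert_subset haf' (singleton_subset_iff.2 hbf'))
  exact ⟨hab, f, mem_filter.2 ⟨hf, hcard⟩, haf', hbf'⟩

theorem isSepVertex_of_separation {w : α} (hw : w ∈ G.verts) {A B : Finset α}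
    (hA : A.Nonempty) (hB : B.Nonempty) (hAB : Disjoint A B) (hcover : A ∪ B = G.verts.erase w)
    (hedge : ∀ f ∈ G.edges, G.inc f ⊆ insert w A ∨ G.inc f ⊆ insert w B) :
    IsSepVertex G w := by
  have hwA : w ∉ A := fun h => by simpa using hcover.subset (mem_union_left B h)
  have hwB : w ∉ B := fun h => by simpa using hcover.subset (mem_union_right A h)
  refine ⟨insert w A, insert w B, ?_, ?_, ?_, ?_, hedge⟩
  · rw [← insert_union_distrib, hcover, insert_erase hw]
  · rw [← insert_inter_distrib, disjoint_iff_inter_eq_empty.1 hAB, insert_empty]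
  · rw [card_insert_of_notMem hwA]; have := hA.card_pos; omega
  · rw [card_insert_of_notMem hwB]; have := hB.card_pos; omega

theorem connected_shrink (hblock : ∀ v, ¬ IsSepVertex G v) {w : α} (hw : w ∈ G.verts) :
    (G.shrink w).Connected := by
  intro a ha b hb
  by_contra hab
  set R := Relation.ReflTransGen (G.shrink w).Adj a
  have hclosed : ∀ f ∈ G.edges, ∀ z ∈ (G.inc f).erase w, ∀ z' ∈ (G.inc f).erase w,
      R z → R z' := by
    intro f hf z hz z' hz' hRz
    by_cases hzz' : z = z'
    · exact hzz' ▸ hRz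
    have hadj : G.Adj z z' := ⟨hzz', f, hf, mem_of_mem_erase hz, mem_of_mem_erase hz'⟩
    exact hRz.tail (hadj.shrink (ne_of_mem_erase hz) (ne_of_mem_erase hz'))
  apply hblock w
  refine isSepVertex_of_separation (A := (G.verts.erase w).filter R)
    (B := (G.verts.erase w).filter (¬ R ·)) hw ⟨a, mem_filter.2 ⟨ha, .refl⟩⟩
    ⟨b, mem_filter.2 ⟨hb, hab⟩⟩ (disjoint_filter_filter_not _ _ _)
    (filter_union_filter_not_eq _ _) ?_
  intro f hf
  have hsub : (G.inc f).erase w ⊆ G.verts.erase w := erase_subset_erase w (G.inc_sub f hf)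
  by_cases hR : ∃ z ∈ (G.inc f).erase w, R z
  · obtain ⟨z, hz, hRz⟩ := hR
    exact Or.inl ((insert_erase_subset w _).trans (insert_subset_insert w fun z' hz' =>
      mem_filter.2 ⟨hsub hz', hclosed f hf z hz z' hz' hRz⟩))
  · simp only [not_exists, not_and] at hR
    exact Or.inr ((insert_erase_subset w _).trans (insert_subset_insert w fun z' hz' =>
      mem_filter.2 ⟨hsub hz', hR z' hz'⟩))

theorem degree_eraseEdge_le (f : ℕ) (z : α) : (G.eraseEdge f).degree z ≤ G.degree z :=
  card_le_card (filter_subset_filter _ (erase_subset _ _))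

theorem degree_eraseEdge_add_one {f : ℕ} (hf : f ∈ G.edges) {z : α} (hz : z ∈ G.inc f) :
    (G.eraseEdge f).degree z + 1 = G.degree z := by
  rw [degree, eraseEdge, filter_erase]
  exact card_erase_add_one (mem_filter.2 ⟨hf, hz⟩)

omit [DecidableEq α] in
theorem Connected.exists_reach_eraseEdge (hG : G.Connected) {f : ℕ} (hf : f ∈ G.edges)
    {z₀ : α} (hz₀ : z₀ ∈ G.inc f) {a : α} (ha : a ∈ G.verts) :
    ∃ z ∈ G.inc f, Relation.ReflTransGen (G.eraseEdge f).Adj a z := by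
  induction hG a ha z₀ (G.inc_sub f hf hz₀) using Relation.ReflTransGen.head_induction_on with
  | refl => exact ⟨z₀, hz₀, .refl⟩
  | @head b c hbc _ ih =>
    obtain ⟨hne, g, hg, hbg, hcg⟩ := hbc
    by_cases hgf : g = f
    · exact ⟨b, hgf ▸ hbg, .refl⟩
    · obtain ⟨z, hz, hcz⟩ := ih (G.inc_sub g hg hcg)
      exact ⟨z, hz, .head ⟨hne, g, mem_erase.2 ⟨hgf, hg⟩, hbg, hcg⟩ hcz⟩

end HGraph

namespace Relation

def ReachWithin {γ : Type*} (r : γ → γ → Prop) (S : γ → Prop) : ℕ → γ → Prop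
  | 0 => S
  | n + 1 => fun a => ReachWithin r S n a ∨ ∃ b, r a b ∧ ReachWithin r S n b

variable {γ : Type*} {r : γ → γ → Prop} {S : γ → Prop}

theorem ReachWithin.mono {m n : ℕ} (hmn : m ≤ n) {a : γ} (h : ReachWithin r S m a) :
    ReachWithin r S n a := by
  induction hmn with
  | refl => exact h
  | step _ ih => exact Or.inl ih

theorem ReflTransGen.exists_reachWithin {a s : γ} (h : ReflTransGen r a s) (hs : S s) :
    ∃ n, ReachWithin r S n a := by
  induction h using ReflTransGen.head_induction_on with
  | refl => exact ⟨0, hs⟩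
  | @head a b hab _ ih =>
    obtain ⟨n, hn⟩ := ih
    exact ⟨n + 1, Or.inr ⟨b, hab, hn⟩⟩

/-- Take for `w` a point of `V` farthest from `S`. -/
theorem exists_forall_reflTransGen_avoiding {V : Finset γ} (hV : V.Nonempty)
    (hr : ∀ a b, r a b → b ∈ V) (hreach : ∀ a ∈ V, ∃ s, S s ∧ ReflTransGen r a s) :
    ∃ w ∈ V, ∀ a ∈ V, a ≠ w →
      ∃ s, S s ∧ s ≠ w ∧ ReflTransGen (fun b c => r b c ∧ b ≠ w ∧ c ≠ w) a s := by
  have hfin : ∀ a ∈ V, ∃ n, ReachWithin r S n a := fun a ha =>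
    let ⟨_, hs, has⟩ := hreach a ha
    has.exists_reachWithin hs
  let dist : γ → ℕ := fun a => sInf {n | ReachWithin r S n a}
  obtain ⟨w, hw, hmax⟩ := V.exists_max_image dist hV
  refine ⟨w, hw, fun a ha haw => ?_⟩
  obtain ⟨n, hn⟩ := hfin a ha
  induction n generalizing a with
  | zero => exact ⟨a, hn, haw, .refl⟩
  | succ n ih =>
    by_cases han : ReachWithin r S n a
    · exact ih a ha haw han
    obtain ⟨b, hab, hb⟩ := hn.resolve_left han
    have hbw : b ≠ w := by
      rintro rfl
      have hdist : dist a ≤ n := (hmax a ha).trans (Nat.sInf_le hb)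
      exact han ((Nat.sInf_mem (hfin a ha)).mono hdist)
    obtain ⟨s, hs, hsw, hbs⟩ := ih b (hr a b hab) hbw hb
    exact ⟨s, hs, hsw, .head ⟨hab, haw, hbw⟩ hbs⟩

end Relation

structure IsCoverWith (G : HGraph α) (X : α → Finset β) (H : HGraph β) (M : ℕ → Finset ℕ) :
    Prop where
  disjoint : ∀ u ∈ G.verts, ∀ v ∈ G.verts, u ≠ v → Disjoint (X u) (X v)
  verts_eq : H.verts = G.verts.biUnion X
  indepSet : ∀ v ∈ G.verts, H.IndepSet (X v)
  matching_subset : ∀ f ∈ G.edges, M f ⊆ H.edges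
  card_inc_inter : ∀ f ∈ G.edges, ∀ e ∈ M f, ∀ v ∈ G.inc f, (H.inc e ∩ X v).card = 1
  inc_subset : ∀ f ∈ G.edges, ∀ e ∈ M f, H.inc e ⊆ (G.inc f).biUnion X
  pairwise_disjoint : ∀ f ∈ G.edges, ∀ e₁ ∈ M f, ∀ e₂ ∈ M f, e₁ ≠ e₂ →
    Disjoint (H.inc e₁) (H.inc e₂)
  edges_eq : H.edges = G.edges.biUnion M

omit [DecidableEq α] in
theorem isCover_iff_exists_isCoverWith {G : HGraph α} {X : α → Finset β} {H : HGraph β} :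
    IsCover G X H ↔ ∃ M, IsCoverWith G X H M := by
  constructor
  · rintro ⟨h1, h2, h3, M, h4, h5⟩
    exact ⟨M, h1, h2, h3, fun f hf => (h4 f hf).1,
      fun f hf e he => ((h4 f hf).2.1 e he).1, fun f hf e he => ((h4 f hf).2.1 e he).2,
      fun f hf => (h4 f hf).2.2, h5⟩
  · rintro ⟨M, hM⟩
    exact ⟨hM.disjoint, hM.verts_eq, hM.indepSet, M, fun f hf =>
      ⟨hM.matching_subset f hf, fun e he => ⟨hM.card_inc_inter f hf e he,
        hM.inc_subset f hf e he⟩, hM.pairwise_disjoint f hf⟩, hM.edges_eq⟩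

omit [DecidableEq α] in
theorem hasIT_empty (H : HGraph β) (X : α → Finset β) : HasIT H ∅ X :=
  ⟨∅, fun e he hsub => by simpa [subset_empty.1 hsub] using H.inc_card e he, by simp⟩

namespace IsCoverWith

variable {G : HGraph α} {X : α → Finset β} {H : HGraph β} {M : ℕ → Finset ℕ}
  (hM : IsCoverWith G X H M)
include hM

theorem eq_of_mem {u v : α} (hu : u ∈ G.verts) (hv : v ∈ G.verts) {y : β} (hyu : y ∈ X u)
    (hyv : y ∈ X v) : u = v := by
  by_contra huv
  exact disjoint_left.1 (hM.disjoint u hu v hv huv) hyu hyv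

omit [DecidableEq α] in
theorem exists_mem_matching {e : ℕ} (he : e ∈ H.edges) : ∃ f ∈ G.edges, e ∈ M f :=
  mem_biUnion.1 (hM.edges_eq ▸ he)

theorem mem_inc_of_mem_inc {f e : ℕ} (hf : f ∈ G.edges) (he : e ∈ M f) {w : α}
    (hw : w ∈ G.verts) {x : β} (hxw : x ∈ X w) (hxe : x ∈ H.inc e) : w ∈ G.inc f := by
  obtain ⟨z, hz, hxz⟩ := mem_biUnion.1 (hM.inc_subset f hf e he hxe)
  exact hM.eq_of_mem (G.inc_sub f hf hz) hw hxz hxw ▸ hz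

omit [DecidableEq α] in
theorem inc_inter_eq_singleton {f e : ℕ} (hf : f ∈ G.edges) (he : e ∈ M f) {w : α}
    (hw : w ∈ G.inc f) {x : β} (hxw : x ∈ X w) (hxe : x ∈ H.inc e) : H.inc e ∩ X w = {x} := by
  obtain ⟨y, hy⟩ := card_eq_one.1 (hM.card_inc_inter f hf e he w hw)
  rw [hy, mem_singleton.1 (hy ▸ mem_inter.2 ⟨hxe, hxw⟩ : x ∈ ({y} : Finset β))]

theorem card_inc_inter_le_one {e : ℕ} (he : e ∈ H.edges) {v : α} (hv : v ∈ G.verts) :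
    (H.inc e ∩ X v).card ≤ 1 := by
  obtain ⟨f, hf, hef⟩ := hM.exists_mem_matching he
  rw [card_le_one]
  intro a ha b hb
  have hvf := hM.mem_inc_of_mem_inc hf hef hv (mem_inter.1 ha).2 (mem_inter.1 ha).1
  have hb' := hM.inc_inter_eq_singleton hf hef hvf (mem_inter.1 ha).2 (mem_inter.1 ha).1 ▸ hb
  exact (mem_singleton.1 hb').symm

omit [DecidableEq α] in
theorem card_inc {f e : ℕ} (hf : f ∈ G.edges) (he : e ∈ M f) :
    (H.inc e).card = (G.inc f).card := by
  have hsplit : H.inc e = (G.inc f).biUnion (fun v => H.inc e ∩ X v) := by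
    ext y
    simp only [mem_biUnion, mem_inter]
    constructor
    · intro hy
      obtain ⟨v, hv, hyv⟩ := mem_biUnion.1 (hM.inc_subset f hf e he hy)
      exact ⟨v, hv, hy, hyv⟩
    · rintro ⟨_, _, hy, _⟩
      exact hy
  rw [hsplit, card_biUnion, sum_congr rfl (hM.card_inc_inter f hf e he), sum_const,
    smul_eq_mul, mul_one]
  intro a ha b hb hab
  exact (hM.disjoint a (G.inc_sub f hf ha) b (G.inc_sub f hf hb) hab).mono
    inter_subset_right inter_subset_right

omit [DecidableEq α] in
theorem eraseEdge {f : ℕ} (hMf : M f = ∅) : IsCoverWith (G.eraseEdge f) X H M where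
  disjoint := hM.disjoint
  verts_eq := hM.verts_eq
  indepSet := hM.indepSet
  matching_subset g hg := hM.matching_subset g (mem_of_mem_erase hg)
  card_inc_inter g hg := hM.card_inc_inter g (mem_of_mem_erase hg)
  inc_subset g hg := hM.inc_subset g (mem_of_mem_erase hg)
  pairwise_disjoint g hg := hM.pairwise_disjoint g (mem_of_mem_erase hg)
  edges_eq := by
    ext e
    simp only [hM.edges_eq, HGraph.eraseEdge, mem_biUnion, mem_erase]
    constructor
    · rintro ⟨g, hg, he⟩
      exact ⟨g, ⟨by rintro rfl; simp [hMf] at he, hg⟩, he⟩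
    · rintro ⟨g, ⟨_, hg⟩, he⟩
      exact ⟨g, hg, he⟩

omit [DecidableEq α] in
theorem eq_of_mem_inc_of_mem_inc {f e₁ e₂ : ℕ} (hf : f ∈ G.edges) (he₁ : e₁ ∈ M f)
    (he₂ : e₂ ∈ M f) {y : β} (hy₁ : y ∈ H.inc e₁) (hy₂ : y ∈ H.inc e₂) : e₁ = e₂ := by
  by_contra hne
  exact disjoint_left.1 (hM.pairwise_disjoint f hf e₁ he₁ e₂ he₂ hne) hy₁ hy₂

theorem card_inter_nbhd_le_mult {w z : α} (hw : w ∈ G.verts) (hz : z ∈ G.verts) (hzw : z ≠ w)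
    {x : β} (hx : x ∈ X w) : (X z ∩ H.nbhd x).card ≤ G.mult z w := by
  let F := G.edges.filter (fun f => G.inc f = {z, w})
  let partners : ℕ → Finset β := fun f =>
    (X z).filter (fun y => ∃ e ∈ M f, x ∈ H.inc e ∧ y ∈ H.inc e)
  have hsub : X z ∩ H.nbhd x ⊆ F.biUnion partners := by
    intro y hy
    obtain ⟨hyz, hyx⟩ := mem_inter.1 hy
    obtain ⟨-, e, he, hinc⟩ := mem_filter.1 hyx
    obtain ⟨f, hf, hef⟩ := hM.exists_mem_matching he
    have hxe : x ∈ H.inc e := by simp [hinc]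
    have hye : y ∈ H.inc e := by simp [hinc]
    have hxy : x ≠ y := fun h => hzw (hM.eq_of_mem hz hw hyz (h ▸ hx))
    have hcard : (G.inc f).card ≤ 2 := by
      rw [← hM.card_inc hf hef, hinc, card_pair hxy]
    have hinc_f := inc_eq_pair_of_card_le hzw (hM.mem_inc_of_mem_inc hf hef hz hyz hye)
      (hM.mem_inc_of_mem_inc hf hef hw hx hxe) hcard
    exact mem_biUnion.2 ⟨f, mem_filter.2 ⟨hf, hinc_f⟩, mem_filter.2 ⟨hyz, e, hef, hxe, hye⟩⟩
  have hpartners : ∀ f ∈ F, (partners f).card ≤ 1 := by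
    intro f hf
    rw [card_le_one]
    rintro y₁ hy₁ y₂ hy₂
    obtain ⟨hy₁z, e₁, he₁, hx₁, hy₁e⟩ := mem_filter.1 hy₁
    obtain ⟨hy₂z, e₂, he₂, hx₂, hy₂e⟩ := mem_filter.1 hy₂
    have hfG := (mem_filter.1 hf).1
    obtain rfl := hM.eq_of_mem_inc_of_mem_inc hfG he₁ he₂ hx₁ hx₂
    exact card_le_one.1 (hM.card_inc_inter_le_one (hM.matching_subset f hfG he₁) hz)
      y₁ (mem_inter.2 ⟨hy₁e, hy₁z⟩) y₂ (mem_inter.2 ⟨hy₂e, hy₂z⟩)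
  calc (X z ∩ H.nbhd x).card ≤ (F.biUnion partners).card := card_le_card hsub
    _ ≤ F.card * 1 := card_biUnion_le_card_mul F partners 1 hpartners
    _ = G.mult z w := mul_one _

theorem exists_matching_of_inc_subset {u v : α} (hu : u ∈ G.verts) (hv : v ∈ G.verts)
    (huv : u ≠ v) {e : ℕ} (he : e ∈ H.edges) (hsub : H.inc e ⊆ X u ∪ X v) :
    ∃ f ∈ G.edges, G.inc f = {u, v} ∧ e ∈ M f := by
  obtain ⟨f, hf, hef⟩ := hM.exists_mem_matching he
  refine ⟨f, hf, inc_eq_pair_of_subset hf huv fun z hz => ?_, hef⟩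
  obtain ⟨y, hy⟩ := card_eq_one.1 (hM.card_inc_inter f hf e hef z hz)
  obtain ⟨hye, hyz⟩ := mem_inter.1 (hy ▸ mem_singleton_self y)
  have hzV := G.inc_sub f hf hz
  rcases mem_union.1 (hsub hye) with hyu | hyv
  · simp [hM.eq_of_mem hzV hu hyz hyu]
  · simp [hM.eq_of_mem hzV hv hyz hyv]

theorem bipartite_of_mem_edges_induce {u v : α} (hu : u ∈ G.verts) (hv : v ∈ G.verts)
    (huv : u ≠ v) {e : ℕ} (he : e ∈ (H.induce (X u ∪ X v)).edges) :
    (H.inc e).card = 2 ∧ (H.inc e ∩ X u).card = 1 ∧ (H.inc e ∩ X v).card = 1 := by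
  obtain ⟨heH, hsub⟩ := mem_filter.1 he
  obtain ⟨f, hf, hinc, hef⟩ := hM.exists_matching_of_inc_subset hu hv huv heH hsub
  exact ⟨by rw [hM.card_inc hf hef, hinc, card_pair huv],
    hM.card_inc_inter f hf e hef u (by simp [hinc]),
    hM.card_inc_inter f hf e hef v (by simp [hinc])⟩

theorem degree_induce_le_mult {u v : α} (hu : u ∈ G.verts) (hv : v ∈ G.verts) (huv : u ≠ v)
    (y : β) : (H.induce (X u ∪ X v)).degree y ≤ G.mult u v := by
  let F := G.edges.filter (fun f => G.inc f = {u, v})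
  have hsub : (H.induce (X u ∪ X v)).edges.filter (fun e => y ∈ H.inc e) ⊆
      F.biUnion (fun f => (M f).filter (fun e => y ∈ H.inc e)) := by
    intro e he
    obtain ⟨he, hye⟩ := mem_filter.1 he
    obtain ⟨heH, hsub⟩ := mem_filter.1 he
    obtain ⟨f, hf, hinc, hef⟩ := hM.exists_matching_of_inc_subset hu hv huv heH hsub
    exact mem_biUnion.2 ⟨f, mem_filter.2 ⟨hf, hinc⟩, mem_filter.2 ⟨hef, hye⟩⟩
  have hpieces : ∀ f ∈ F, ((M f).filter (fun e => y ∈ H.inc e)).card ≤ 1 := by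
    intro f hf
    rw [card_le_one]
    intro e₁ he₁ e₂ he₂
    exact hM.eq_of_mem_inc_of_mem_inc (mem_filter.1 hf).1 (mem_filter.1 he₁).1
      (mem_filter.1 he₂).1 (mem_filter.1 he₁).2 (mem_filter.1 he₂).2
  calc (H.induce (X u ∪ X v)).degree y ≤ _ := card_le_card hsub
    _ ≤ F.card * 1 := card_biUnion_le_card_mul _ _ 1 hpieces
    _ = G.mult u v := mul_one _

theorem card_inter_nbhd_le_degree_induce {u v : α} (hv : v ∈ G.verts) {y : β} (hy : y ∈ X u) :
    (X v ∩ H.nbhd y).card ≤ (H.induce (X u ∪ X v)).degree y := by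
  let E := (H.induce (X u ∪ X v)).edges.filter (fun e => y ∈ H.inc e)
  have hsub : X v ∩ H.nbhd y ⊆ E.biUnion (fun e => H.inc e ∩ X v) := by
    intro z hz
    obtain ⟨hzv, hzy⟩ := mem_inter.1 hz
    obtain ⟨-, e, he, hinc⟩ := mem_filter.1 hzy
    have hsub : H.inc e ⊆ X u ∪ X v := by
      rw [hinc]
      exact insert_subset (mem_union_left _ hy) (singleton_subset_iff.2 (mem_union_right _ hzv))
    exact mem_biUnion.2 ⟨e, mem_filter.2 ⟨mem_filter.2 ⟨he, hsub⟩, by simp [hinc]⟩,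
      mem_inter.2 ⟨by simp [hinc], hzv⟩⟩
  calc (X v ∩ H.nbhd y).card ≤ _ := card_le_card hsub
    _ ≤ E.card * 1 := card_biUnion_le_card_mul _ _ 1 fun e he =>
        hM.card_inc_inter_le_one (mem_filter.1 (mem_filter.1 he).1).1 hv
    _ = _ := mul_one _

omit [DecidableEq α] in
theorem card_eq_card_matching_of_saturated {f : ℕ} (hf : f ∈ G.edges) {w : α}
    (hw : w ∈ G.inc f) (hsat : ∀ x ∈ X w, ∃ e ∈ M f, x ∈ H.inc e) :
    (X w).card = (M f).card := by
  have hsplit : X w = (M f).biUnion (fun e => H.inc e ∩ X w) := by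
    ext x
    simp only [mem_biUnion, mem_inter]
    constructor
    · intro hx
      obtain ⟨e, he, hxe⟩ := hsat x hx
      exact ⟨e, he, hxe, hx⟩
    · rintro ⟨_, _, _, hx⟩
      exact hx
  rw [hsplit, card_biUnion, sum_congr rfl fun e he => hM.card_inc_inter f hf e he w hw,
    sum_const, smul_eq_mul, mul_one]
  intro e₁ he₁ e₂ he₂ hne
  exact (hM.pairwise_disjoint f hf e₁ he₁ e₂ he₂ hne).mono inter_subset_left inter_subset_left

end IsCoverWith

theorem HGraph.sum_card_inter_nbhd_comm (H : HGraph β) {A B : Finset β} (hA : A ⊆ H.verts)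
    (hB : B ⊆ H.verts) :
    ∑ x ∈ A, (B ∩ H.nbhd x).card = ∑ y ∈ B, (A ∩ H.nbhd y).card := by
  let r : β → β → Prop := fun x y => ∃ e ∈ H.edges, H.inc e = {x, y}
  have hnbhd : ∀ {C : Finset β}, C ⊆ H.verts → ∀ x, C ∩ H.nbhd x = C.filter (r x) := by
    intro C hC x
    ext y
    simp only [mem_inter, mem_filter, nbhd]
    exact ⟨fun ⟨hy, _, h⟩ => ⟨hy, h⟩, fun ⟨hy, h⟩ => ⟨hy, hC hy, h⟩⟩
  calc ∑ x ∈ A, (B ∩ H.nbhd x).card = ∑ x ∈ A, (B.bipartiteAbove r x).card :=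
        sum_congr rfl fun x _ => by rw [hnbhd hB]; rfl
    _ = ∑ y ∈ B, (A.bipartiteBelow r y).card := sum_card_bipartiteAbove_eq_sum_card_bipartiteBelow r
    _ = ∑ y ∈ B, (A ∩ H.nbhd y).card := sum_congr rfl fun y _ => by
        simp only [hnbhd hA, bipartiteBelow, r, pair_comm]

section Reduction

variable {G : HGraph α} {X : α → Finset β} {H : HGraph β} {M : ℕ → Finset ℕ} {w : α} {x : β}

theorem mem_reducedVerts {y : β} :
    y ∈ reducedVerts G X H w x ↔ ∃ u ∈ G.verts, u ≠ w ∧ y ∈ X u ∧ y ∉ H.nbhd x := by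
  simp only [reducedVerts, shrink, mem_biUnion, mem_erase, mem_sdiff, and_assoc]
  exact ⟨fun ⟨u, huw, hu, h⟩ => ⟨u, hu, huw, h⟩, fun ⟨u, hu, huw, h⟩ => ⟨u, huw, hu, h⟩⟩

namespace IsCoverWith

variable (hM : IsCoverWith G X H M)
include hM

theorem mem_reducedVerts_iff {v : α} (hv : v ∈ G.verts) {y : β} (hy : y ∈ X v) :
    y ∈ reducedVerts G X H w x ↔ v ≠ w ∧ y ∉ H.nbhd x := by
  rw [mem_reducedVerts]
  constructor
  · rintro ⟨u, hu, huw, hyu, hyx⟩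
    exact ⟨hM.eq_of_mem hu hv hyu hy ▸ huw, hyx⟩
  · rintro ⟨hvw, hyx⟩
    exact ⟨v, hv, hvw, hy, hyx⟩

theorem mem_inc_iff_of_subset_reducedVerts (hw : w ∈ G.verts) (hx : x ∈ X w) {f e : ℕ}
    (hf : f ∈ G.edges) (he : e ∈ M f) (hsub : (H.inc e).erase x ⊆ reducedVerts G X H w x) :
    x ∈ H.inc e ↔ w ∈ G.inc f := by
  refine ⟨hM.mem_inc_of_mem_inc hf he hw hx, fun hwf => ?_⟩
  obtain ⟨y, hy⟩ := card_eq_one.1 (hM.card_inc_inter f hf e he w hwf)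
  obtain ⟨hye, hyw⟩ := mem_inter.1 (hy ▸ mem_singleton_self y)
  by_contra hxe
  have hyx : y ≠ x := fun h => hxe (h ▸ hye)
  exact ((hM.mem_reducedVerts_iff hw hyw).1 (hsub (mem_erase.2 ⟨hyx, hye⟩))).1 rfl

theorem card_inc_erase_of_subset_reducedVerts (hw : w ∈ G.verts) (hx : x ∈ X w) {f e : ℕ}
    (hf : f ∈ G.edges) (he : e ∈ M f) (hsub : (H.inc e).erase x ⊆ reducedVerts G X H w x) :
    ((H.inc e).erase x).card = ((G.inc f).erase w).card := by
  have hiff := hM.mem_inc_iff_of_subset_reducedVerts hw hx hf he hsub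
  by_cases hwf : w ∈ G.inc f
  · rw [card_erase_of_mem hwf, card_erase_of_mem (hiff.2 hwf), hM.card_inc hf he]
  · rw [erase_eq_of_notMem hwf, erase_eq_of_notMem (mt hiff.1 hwf), hM.card_inc hf he]

theorem reduce (hw : w ∈ G.verts) (hx : x ∈ X w) :
    IsCoverWith (G.shrink w) (fun z => X z \ H.nbhd x) (reduceH G X H w x)
      (fun f => M f ∩ (reduceH G X H w x).edges) where
  disjoint u hu v hv huv :=
    (hM.disjoint u (mem_of_mem_erase hu) v (mem_of_mem_erase hv) huv).mono sdiff_subset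
      sdiff_subset
  verts_eq := rfl
  indepSet v hv e he hsub := by
    obtain ⟨heH, hcard, -⟩ := mem_filter.1 he
    have hsub' : (H.inc e).erase x ⊆ H.inc e ∩ X v := fun y hy =>
      mem_inter.2 ⟨mem_of_mem_erase hy, (mem_sdiff.1 (hsub hy)).1⟩
    have := (card_le_card hsub').trans (hM.card_inc_inter_le_one heH (mem_of_mem_erase hv))
    omega
  matching_subset _ _ := inter_subset_right
  card_inc_inter f hf e he v hv := by
    obtain ⟨hfG, -⟩ := mem_filter.1 hf
    obtain ⟨heM, heH'⟩ := mem_inter.1 he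
    obtain ⟨hvw, hvf⟩ := mem_erase.1 hv
    have hvV := G.inc_sub f hfG hvf
    have hrv := (mem_filter.1 heH').2.2
    suffices (H.inc e).erase x ∩ (X v \ H.nbhd x) = H.inc e ∩ X v from
      this ▸ hM.card_inc_inter f hfG e heM v hvf
    ext y
    simp only [mem_inter, mem_erase, mem_sdiff]
    constructor
    · rintro ⟨⟨-, hye⟩, hyv, -⟩
      exact ⟨hye, hyv⟩
    · rintro ⟨hye, hyv⟩
      have hyx : y ≠ x := fun h => hvw (hM.eq_of_mem hvV hw hyv (h ▸ hx))
      exact ⟨⟨hyx, hye⟩, hyv, ((hM.mem_reducedVerts_iff hvV hyv).1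
        (hrv (mem_erase.2 ⟨hyx, hye⟩))).2⟩
  inc_subset f hf e he y hy := by
    obtain ⟨hfG, -⟩ := mem_filter.1 hf
    obtain ⟨heM, heH'⟩ := mem_inter.1 he
    obtain ⟨u, hu, huw, hyu, hyx⟩ := mem_reducedVerts.1 ((mem_filter.1 heH').2.2 hy)
    have huf := hM.mem_inc_of_mem_inc hfG heM hu hyu (mem_of_mem_erase hy)
    exact mem_biUnion.2 ⟨u, mem_erase.2 ⟨huw, huf⟩, mem_sdiff.2 ⟨hyu, hyx⟩⟩
  pairwise_disjoint f hf e₁ he₁ e₂ he₂ hne :=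
    (hM.pairwise_disjoint f (mem_filter.1 hf).1 e₁ (mem_inter.1 he₁).1 e₂ (mem_inter.1 he₂).1
      hne).mono (erase_subset x _) (erase_subset x _)
  edges_eq := by
    ext e
    simp only [mem_biUnion, mem_inter]
    constructor
    · intro he
      obtain ⟨heH, hcard, hrv⟩ := mem_filter.1 he
      obtain ⟨f, hf, hef⟩ := hM.exists_mem_matching heH
      have hcard' := hM.card_inc_erase_of_subset_reducedVerts hw hx hf hef hrv
      exact ⟨f, mem_filter.2 ⟨hf, hcard' ▸ hcard⟩, hef, he⟩
    · rintro ⟨_, _, _, he⟩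
      exact he

theorem indepSet_insert_of_indepSet_reduce (hw : w ∈ G.verts) (hx : x ∈ X w) {T : Finset β}
    (hT : T ⊆ reducedVerts G X H w x) (hind : (reduceH G X H w x).IndepSet T) :
    H.IndepSet (insert x T) := by
  intro e he hsub
  obtain ⟨f, hf, hef⟩ := hM.exists_mem_matching he
  have herase : (H.inc e).erase x ⊆ T := fun y hy =>
    (mem_insert.1 (hsub (mem_of_mem_erase hy))).resolve_left (ne_of_mem_erase hy)
  have hrv := herase.trans hT
  have hcard := hM.card_inc_erase_of_subset_reducedVerts hw hx hf hef hrv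
  by_cases h2 : 2 ≤ ((H.inc e).erase x).card
  · exact hind e (mem_filter.2 ⟨he, h2, hrv⟩) herase
  -- otherwise `e` comes from an ordinary edge `{w, v}` and is `{x, y}` with `y ∈ T`
  -- adjacent to `x`, but the reduction removed the neighbours of `x`
  have hwf : w ∈ G.inc f := by
    by_contra hwf
    rw [erase_eq_of_notMem hwf] at hcard
    exact h2 (hcard ▸ G.inc_card f hf)
  have hxe := (hM.mem_inc_iff_of_subset_reducedVerts hw hx hf hef hrv).2 hwf
  have hcard_e := card_erase_add_one hxe
  have hpos : 0 < ((H.inc e).erase x).card := by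
    have := H.inc_card e he
    omega
  obtain ⟨y, hy⟩ := card_pos.1 hpos
  have hinc : H.inc e = {x, y} :=
    inc_eq_pair_of_card_le (ne_of_mem_erase hy).symm hxe (mem_of_mem_erase hy) (by omega)
  obtain ⟨_, _, _, _, hyx⟩ := mem_reducedVerts.1 (hrv hy)
  exact hyx (mem_filter.2 ⟨H.inc_sub e he (mem_of_mem_erase hy), e, he, hinc⟩)

theorem hasIT_of_hasIT_reduce (hw : w ∈ G.verts) (hx : x ∈ X w)
    (hIT : HasIT (reduceH G X H w x) (G.shrink w).verts (fun z => X z \ H.nbhd x)) :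
    HasIT H G.verts X := by
  obtain ⟨T₀, hind, htr⟩ := hIT
  set T := T₀ ∩ reducedVerts G X H w x
  refine ⟨insert x T, hM.indepSet_insert_of_indepSet_reduce hw hx inter_subset_right
    fun e he hsub => hind e he (hsub.trans inter_subset_left), fun v hv => ?_⟩
  by_cases hvw : v = w
  · subst hvw
    have hTv : Disjoint T (X v) := disjoint_left.2 fun y hy hyv =>
      ((hM.mem_reducedVerts_iff hw hyv).1 (mem_inter.1 hy).2).1 rfl
    rw [insert_inter_of_mem hx, disjoint_iff_inter_eq_empty.1 hTv, insert_empty, card_singleton]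
  · have hxv : x ∉ X v := fun hxv => hvw (hM.eq_of_mem hv hw hxv hx)
    rw [insert_inter_of_notMem hxv, ← htr v (mem_erase.2 ⟨hvw, hv⟩)]
    congr 1
    ext y
    simp only [T, mem_inter, mem_sdiff]
    constructor
    · rintro ⟨⟨hy, hrv⟩, hyv⟩
      exact ⟨hy, hyv, ((hM.mem_reducedVerts_iff hv hyv).1 hrv).2⟩
    · rintro ⟨hy, hyv, hyx⟩
      exact ⟨⟨hy, (hM.mem_reducedVerts_iff hv hyv).2 ⟨hvw, hyx⟩⟩, hyv⟩

theorem degree_shrink_add_card_le (hw : w ∈ G.verts) (hx : x ∈ X w) {z : α}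
    (hz : z ∈ G.verts) (hzw : z ≠ w) :
    (G.shrink w).degree z + (X z).card ≤ (X z \ H.nbhd x).card + G.degree z := by
  have h₁ := degree_eq_degree_shrink_add_mult (G := G) hzw
  have h₂ := card_sdiff_add_card_inter (X z) (H.nbhd x)
  have h₃ := hM.card_inter_nbhd_le_mult hw hz hzw hx
  omega

theorem degree_shrink_le_card_sdiff_nbhd (hw : w ∈ G.verts) (hx : x ∈ X w)
    (hdf : ∀ v ∈ G.verts, G.degree v ≤ (X v).card) :
    ∀ z ∈ (G.shrink w).verts, (G.shrink w).degree z ≤ (X z \ H.nbhd x).card := by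
  intro z hz
  have := hM.degree_shrink_add_card_le hw hx (mem_of_mem_erase hz) (ne_of_mem_erase hz)
  have := hdf z (mem_of_mem_erase hz)
  omega

end IsCoverWith

end Reduction

omit [DecidableEq β] in
theorem HGraph.card_pos_of_reflTransGen {G : HGraph α} {X : α → Finset β}
    (hdf : ∀ v ∈ G.verts, G.degree v ≤ (X v).card) {u v : α} (hu : u ∈ G.verts)
    (huv : Relation.ReflTransGen G.Adj u v) (hv : G.degree v < (X v).card) :
    0 < (X u).card := by
  rcases huv.cases_head with rfl | ⟨b, hub, -⟩
  · omega
  · exact hub.degree_pos.trans_le (hdf u hu)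

namespace IsCoverWith

variable {G : HGraph α} {X : α → Finset β} {H : HGraph β} {M : ℕ → Finset ℕ}

/-- Greedy colouring: choose a colour `x` at a vertex `w` farthest from the slack vertices and
colour the rest by induction; deleting the neighbours of `x` costs each list at most the
multiplicity of the edge to `w`, which is exactly the drop in degree. -/
theorem hasIT_of_forall_reflTransGen_slack (hM : IsCoverWith G X H M)
    (hdf : ∀ v ∈ G.verts, G.degree v ≤ (X v).card)
    (hslack : ∀ u ∈ G.verts, ∃ v, (v ∈ G.verts ∧ G.degree v < (X v).card) ∧
      Relation.ReflTransGen G.Adj u v) :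
    HasIT H G.verts X := by
  obtain ⟨n, hn⟩ : ∃ n, G.verts.card = n := ⟨_, rfl⟩
  induction n generalizing G X H M with
  | zero => exact card_eq_zero.1 hn ▸ hasIT_empty H X
  | succ n ih =>
    obtain ⟨w, hw, hfar⟩ := Relation.exists_forall_reflTransGen_avoiding
      (card_pos.1 (by omega)) (fun _ _ hab => (Adj.mem_verts hab).2) hslack
    obtain ⟨w', hw', hww'⟩ := hslack w hw
    obtain ⟨x, hx⟩ := card_pos.1 (card_pos_of_reflTransGen hdf hw hww' hw'.2)
    refine hM.hasIT_of_hasIT_reduce hw hx (ih (hM.reduce hw hx)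
      (hM.degree_shrink_le_card_sdiff_nbhd hw hx hdf) (fun u hu => ?_) ?_)
    · obtain ⟨s, ⟨hs, hslack_s⟩, hsw, hus⟩ := hfar u (mem_of_mem_erase hu) (ne_of_mem_erase hu)
      have := hM.degree_shrink_add_card_le hw hx hs hsw
      exact ⟨s, ⟨mem_erase.2 ⟨hsw, hs⟩, by omega⟩,
        Relation.ReflTransGen.mono (fun _ _ ⟨hab, ha, hb⟩ => hab.shrink ha hb) _ _ hus⟩
    · have := card_erase_of_mem hw
      simp only [shrink]
      omega

theorem hasIT_of_connected_of_lt (hM : IsCoverWith G X H M) (hG : G.Connected)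
    (hdf : ∀ v ∈ G.verts, G.degree v ≤ (X v).card) {v : α} (hv : v ∈ G.verts)
    (hlt : G.degree v < (X v).card) : HasIT H G.verts X :=
  hM.hasIT_of_forall_reflTransGen_slack hdf fun u hu => ⟨v, ⟨hv, hlt⟩, hG u hu v hv⟩

/-- Deleting an edge with an empty matching gives slack at its vertices. -/
theorem hasIT_of_matching_eq_empty (hM : IsCoverWith G X H M) (hG : G.Connected)
    (hdf : ∀ v ∈ G.verts, G.degree v ≤ (X v).card) {f : ℕ} (hf : f ∈ G.edges)
    (hMf : M f = ∅) : HasIT H G.verts X := by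
  refine (hM.eraseEdge hMf).hasIT_of_forall_reflTransGen_slack
    (fun v hv => (degree_eraseEdge_le f v).trans (hdf v hv)) fun u hu => ?_
  obtain ⟨z₀, hz₀⟩ := card_pos.1 (two_pos.trans_le (G.inc_card f hf))
  obtain ⟨z, hz, huz⟩ := hG.exists_reach_eraseEdge hf hz₀ hu
  have := degree_eraseEdge_add_one hf hz
  have := hdf z (G.inc_sub f hf hz)
  exact ⟨z, ⟨G.inc_sub f hf hz, by omega⟩, huz⟩

end IsCoverWith

namespace IsCoverWith

variable {G : HGraph α} {X : α → Finset β} {H : HGraph β} {M : ℕ → Finset ℕ}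
  (hM : IsCoverWith G X H M) (hdf : ∀ v ∈ G.verts, G.degree v ≤ (X v).card)
  (hunc : ¬ HasIT H G.verts X)
include hM hdf hunc

theorem card_eq_degree_of_not_hasIT (hG : G.Connected) {v : α} (hv : v ∈ G.verts) :
    (X v).card = G.degree v :=
  ((hdf v hv).lt_or_eq.resolve_left fun hlt =>
    hunc (hM.hasIT_of_connected_of_lt hG hdf hv hlt)).symm

/-- If `y` had fewer neighbours in `X z` than the multiplicity of `zu`, colouring `u` by `y`
would leave slack at `z` in the connected graph `G - u`. -/
theorem card_inter_nbhd_eq_mult_of_not_hasIT (hblock : ∀ w, ¬ IsSepVertex G w) {u : α}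
    (hu : u ∈ G.verts) {y : β} (hy : y ∈ X u) {z : α} (hz : z ∈ G.verts) (hzu : z ≠ u) :
    (X z ∩ H.nbhd y).card = G.mult z u := by
  refine (hM.card_inter_nbhd_le_mult hu hz hzu hy).antisymm (not_lt.1 fun hlt => hunc ?_)
  refine hM.hasIT_of_hasIT_reduce hu hy ((hM.reduce hu hy).hasIT_of_connected_of_lt
    (connected_shrink hblock hu) (hM.degree_shrink_le_card_sdiff_nbhd hu hy hdf)
    (mem_erase.2 ⟨hzu, hz⟩) ?_)
  have := degree_eq_degree_shrink_add_mult (G := G) hzu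
  have := card_sdiff_add_card_inter (X z) (H.nbhd y)
  have := hdf z hz
  omega

/-- If the matching of a hyperedge `f` missed `x ∈ X w`, colouring `w` by `x` would leave `f`
with an empty matching in the connected graph `G - w`. -/
theorem exists_mem_matching_mem_inc_of_not_hasIT (hblock : ∀ w, ¬ IsSepVertex G w) {f : ℕ}
    (hf : f ∈ G.edges) (h3 : 3 ≤ (G.inc f).card) {w : α} (hw : w ∈ G.inc f) {x : β}
    (hx : x ∈ X w) : ∃ e ∈ M f, x ∈ H.inc e := by
  by_contra hmiss
  simp only [not_exists, not_and] at hmiss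
  have hwV := G.inc_sub f hf hw
  have hf' : f ∈ (G.shrink w).edges := by
    have := card_erase_add_one hw
    exact mem_filter.2 ⟨hf, by omega⟩
  have hMf : M f ∩ (reduceH G X H w x).edges = ∅ := by
    refine eq_empty_of_forall_notMem fun e he => ?_
    obtain ⟨hef, heH'⟩ := mem_inter.1 he
    exact hmiss e hef ((hM.mem_inc_iff_of_subset_reducedVerts hwV hx hf hef
      (mem_filter.1 heH').2.2).2 hw)
  exact hunc (hM.hasIT_of_hasIT_reduce hwV hx ((hM.reduce hwV hx).hasIT_of_matching_eq_empty
    (connected_shrink hblock hwV) (hM.degree_shrink_le_card_sdiff_nbhd hwV hx hdf) hf' hMf))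

theorem card_eq_card_of_adj_of_not_hasIT (hblock : ∀ w, ¬ IsSepVertex G w) {u v : α}
    (h : G.Adj u v) : (X u).card = (X v).card := by
  obtain ⟨huv, f, hf, hu, hv⟩ := h
  by_cases h3 : 3 ≤ (G.inc f).card
  · have hsat := fun w (hw : w ∈ G.inc f) x (hx : x ∈ X w) =>
      hM.exists_mem_matching_mem_inc_of_not_hasIT hdf hunc hblock hf h3 hw hx
    rw [hM.card_eq_card_matching_of_saturated hf hu (hsat u hu),
      hM.card_eq_card_matching_of_saturated hf hv (hsat v hv)]
  -- an ordinary edge: count the edges of `H` between `X u` and `X v` from both sides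
  have hpos : 0 < G.mult u v :=
    card_pos.2 ⟨f, mem_filter.2 ⟨hf, inc_eq_pair_of_card_le huv hu hv (by omega)⟩⟩
  have huV := G.inc_sub f hf hu
  have hvV := G.inc_sub f hf hv
  have hsum := H.sum_card_inter_nbhd_comm (hM.verts_eq ▸ subset_biUnion_of_mem X huV)
    (hM.verts_eq ▸ subset_biUnion_of_mem X hvV)
  rw [sum_congr rfl fun x hx =>
      hM.card_inter_nbhd_eq_mult_of_not_hasIT hdf hunc hblock huV hx hvV huv.symm,
    sum_congr rfl fun y hy =>
      hM.card_inter_nbhd_eq_mult_of_not_hasIT hdf hunc hblock hvV hy huV huv,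
    sum_const, sum_const, smul_eq_mul, smul_eq_mul, mult_comm v u] at hsum
  exact Nat.eq_of_mul_eq_mul_right hpos hsum

theorem degree_eq_of_not_hasIT (hG : G.Connected) (hblock : ∀ w, ¬ IsSepVertex G w) {u v : α}
    (hu : u ∈ G.verts) (hv : v ∈ G.verts) : G.degree u = G.degree v := by
  rw [← hM.card_eq_degree_of_not_hasIT hdf hunc hG hu,
    ← hM.card_eq_degree_of_not_hasIT hdf hunc hG hv]
  have huv := hG u hu v hv
  clear hv
  induction huv with
  | refl => rfl
  | tail _ hadj ih => exact ih.trans (hM.card_eq_card_of_adj_of_not_hasIT hdf hunc hblock hadj)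

theorem degree_induce_eq_mult_of_not_hasIT (hblock : ∀ w, ¬ IsSepVertex G w) {u v : α}
    (hu : u ∈ G.verts) (hv : v ∈ G.verts) (huv : u ≠ v) {y : β} (hy : y ∈ X u ∪ X v) :
    (H.induce (X u ∪ X v)).degree y = G.mult u v := by
  refine (hM.degree_induce_le_mult hu hv huv y).antisymm ?_
  rcases mem_union.1 hy with hyu | hyv
  · calc G.mult u v = (X v ∩ H.nbhd y).card := by
          rw [mult_comm, hM.card_inter_nbhd_eq_mult_of_not_hasIT hdf hunc hblock hu hyu hv huv.symm]
      _ ≤ _ := hM.card_inter_nbhd_le_degree_induce hv hyu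
  · calc G.mult u v = (X u ∩ H.nbhd y).card :=
          (hM.card_inter_nbhd_eq_mult_of_not_hasIT hdf hunc hblock hv hyv hu huv).symm
      _ ≤ _ := union_comm (X u) (X v) ▸ hM.card_inter_nbhd_le_degree_induce hu hyv

end IsCoverWith

/-- if an uncolorable degree-feasible configuration has no separating
vertex, then G is regular and each H[X_u ∪ X_v] is a μ_G(u,v)-regular bipartite
graph with parts X_u and X_v. -/
theorem uncolorable_block_regular (G : HGraph α) (X : α → Finset β) (H : HGraph β)
    (hG : G.Connected) (hC : IsCover G X H)
    (hdf : ∀ v ∈ G.verts, G.degree v ≤ (X v).card)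
    (hunc : ¬ HasIT H G.verts X)
    (hblock : ∀ w, ¬ IsSepVertex G w) :
    (∀ u ∈ G.verts, ∀ v ∈ G.verts, G.degree u = G.degree v) ∧
    ∀ u ∈ G.verts, ∀ v ∈ G.verts, u ≠ v →
      (∀ e ∈ (H.induce (X u ∪ X v)).edges,
        (H.inc e).card = 2 ∧ (H.inc e ∩ X u).card = 1 ∧ (H.inc e ∩ X v).card = 1) ∧
      (∀ y ∈ X u ∪ X v, (H.induce (X u ∪ X v)).degree y = G.mult u v) := by
  obtain ⟨M, hM⟩ := isCover_iff_exists_isCoverWith.1 hC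
  exact ⟨fun u hu v hv => hM.degree_eq_of_not_hasIT hdf hunc hG hblock hu hv,
    fun u hu v hv huv => ⟨fun e he => hM.bipartite_of_mem_edges_induce hu hv huv he,
      fun y hy => hM.degree_induce_eq_mult_of_not_hasIT hdf hunc hblock hu hv huv hy⟩⟩
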